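/- arXiv:2111.11273 — 2 statements merged into one kernel-verified Lean document; each statement's English description precedes it below -/
import Mathlib

section
/- Suppose Φ is irreducible and not of type G₂. Let γ₁, γ₂, γ₃, γ₄ ∈ Φ⁺ (not necessarily distinct) satisfy ⟨γ_i,γ_j⟩ ≥ 0 for all i,j, and suppose γ₁+γ₂+γ₃+γ₄ = α − β for some α, β ∈ Φ ∪ {0}. Then α is a root not belonging to {γ₁,γ₂,γ₃,γ₄}, −β is a root not belonging to {γ₁,γ₂,γ₃,γ₄}, and the set {γ₁,γ₂,γ₃,γ₄} has at least two elements. -/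
/- Background setup: a finite reduced crystallographic root system `Φ` with chosen
positive roots `Φ⁺` in a euclidean space `V`, the Cartan pairing, and the basic
combinatorial notions used in the statement. -/

open scoped RealInnerProductSpace

noncomputable section

variable {V : Type*} [NormedAddCommGroup V] [InnerProductSpace ℝ V]

/-- The Cartan pairing `⟨α, β⟩ = 2 (α, β) / (β, β)`. -/
def cpair (α β : V) : ℝ := 2 * ⟪α, β⟫ / ⟪β, β⟫

/-- The reflection associated to `β`, as a linear endomorphism of `V`:
`v ↦ v - (2 (β, v)/(β, β)) • β`. -/
def reflEnd (β : V) : Module.End ℝ V :=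
  LinearMap.id -
    (LinearMap.toSpanSingleton ℝ V β ∘ₗ ((2 / ⟪β, β⟫) • (innerSL ℝ β).toLinearMap))

/-- A subset of `V` is orthogonal if the Cartan pairing of any two distinct
elements vanishes. -/
def OrthogonalSet (S : Set V) : Prop := ∀ γ ∈ S, ∀ γ' ∈ S, γ ≠ γ' → cpair γ γ' = 0

/-- A finite reduced crystallographic root system in the euclidean space `V`,
together with a choice of positive roots. -/
structure RootSystemData (V : Type*) [NormedAddCommGroup V] [InnerProductSpace ℝ V] where
  /-- the set of roots Φ -/
  roots : Set V
  /-- the set of positive roots Φ⁺ -/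
  pos : Set V
  finite : roots.Finite
  ne_zero : ∀ α ∈ roots, α ≠ 0
  span_eq_top : Submodule.span ℝ roots = ⊤
  reduced : ∀ α ∈ roots, ∀ t : ℝ, t • α ∈ roots → t = 1 ∨ t = -1
  crystallographic : ∀ α ∈ roots, ∀ β ∈ roots, ∃ n : ℤ, cpair α β = (n : ℝ)
  reflect_mem : ∀ α ∈ roots, ∀ β ∈ roots, reflEnd β α ∈ roots
  pos_subset : pos ⊆ roots
  pos_iff : ∀ α ∈ roots, (α ∈ pos ↔ ¬ (-α ∈ pos))
  pos_add : ∀ α ∈ pos, ∀ β ∈ pos, α + β ∈ roots → α + β ∈ pos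

namespace RootSystemData

variable (D : RootSystemData V)

/-- Irreducibility: the roots admit no nontrivial partition into two mutually
orthogonal parts. -/
def IsIrreducible : Prop :=
  D.roots.Nonempty ∧
    ∀ s ⊆ D.roots, (∀ α ∈ s, ∀ β ∈ D.roots \ s, ⟪α, β⟫ = 0) → s = ∅ ∨ s = D.roots

/-- An irreducible root system is not of type `G₂` iff no Cartan pairing of two
roots equals `±3`. -/
def NotG2 : Prop := ∀ α ∈ D.roots, ∀ β ∈ D.roots, cpair α β ≠ 3 ∧ cpair α β ≠ -3

/-- An irreducible root system is of type `G₂` iff some Cartan pairing of two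
roots equals `±3`. -/
def IsG2 : Prop :=
  D.IsIrreducible ∧ ∃ α ∈ D.roots, ∃ β ∈ D.roots, cpair α β = 3 ∨ cpair α β = -3

/-- All roots have the same length (types A, D, E). -/
def SimplyLaced : Prop := ∀ α ∈ D.roots, ∀ β ∈ D.roots, ⟪α, α⟫ = ⟪β, β⟫

/-- There are exactly two root lengths, with squared-length ratio 2
(types B, C, F₄). -/
def DoublyLaced : Prop :=
  (∃ α ∈ D.roots, ∃ β ∈ D.roots, ⟪β, β⟫ = 2 * ⟪α, α⟫) ∧
    ∀ α ∈ D.roots, ∀ β ∈ D.roots,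
      ⟪α, α⟫ = ⟪β, β⟫ ∨ ⟪β, β⟫ = 2 * ⟪α, α⟫ ∨ ⟪α, α⟫ = 2 * ⟪β, β⟫

/-- A root of maximal length. -/
def IsLong (α : V) : Prop := α ∈ D.roots ∧ ∀ β ∈ D.roots, ⟪β, β⟫ ≤ ⟪α, α⟫

/-- A root of minimal length. -/
def IsShort (α : V) : Prop := α ∈ D.roots ∧ ∀ β ∈ D.roots, ⟪α, α⟫ ≤ ⟪β, β⟫

/-- A set of positive roots is convex if any root which is a linear combination of
two of its elements with positive coefficients lies in it. -/
def ConvexSubset (S : Set V) : Prop :=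
  ∀ α ∈ S, ∀ β ∈ S, ∀ a b : ℝ, 0 < a → 0 < b →
    a • α + b • β ∈ D.roots → a • α + b • β ∈ S

/-- A subset `Ψ ⊆ Φ⁺` is biconvex if both `Ψ` and `Φ⁺ \ Ψ` are convex. -/
def Biconvex (S : Set V) : Prop :=
  S ⊆ D.pos ∧ D.ConvexSubset S ∧ D.ConvexSubset (D.pos \ S)

/-- A subset `Ψ ⊆ Φ⁺` is a combinatorial ideal if `α ∈ Ψ`, `β ∈ Φ⁺`, `α + β ∈ Φ⁺`
imply `α + β ∈ Ψ`. -/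
def CombIdeal (S : Set V) : Prop :=
  S ⊆ D.pos ∧ ∀ α ∈ S, ∀ β ∈ D.pos, α + β ∈ D.pos → α + β ∈ S

end RootSystemData


lemma aux_ipos {x : V} (h : x ≠ 0) : (0:ℝ) < ⟪x, x⟫ :=
  lt_of_not_ge (fun hle => h (real_inner_self_nonpos.mp hle))

lemma aux_cpair_self {x : V} (hx : x ≠ 0) : cpair x x = 2 := by
  have := (aux_ipos hx).ne'
  unfold cpair; field_simp

lemma aux_cpair_add_left (x y z : V) : cpair (x + y) z = cpair x z + cpair y z := by
  unfold cpair; rw [inner_add_left]; ring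

lemma aux_cpair_sub_left (x y z : V) : cpair (x - y) z = cpair x z - cpair y z := by
  unfold cpair; rw [inner_sub_left]; ring

lemma aux_cpair_neg_right (x y : V) : cpair x (-y) = - cpair x y := by
  unfold cpair; rw [inner_neg_right, inner_neg_neg]; ring

lemma aux_cpair_nonneg_inner {x y : V} (hy : y ≠ 0) (h : 0 ≤ cpair x y) : 0 ≤ ⟪x, y⟫ := by
  unfold cpair at h
  have h2 := aux_ipos hy
  by_contra hneg
  push_neg at hneg
  have : 2 * ⟪x,y⟫ / ⟪y,y⟫ < 0 := div_neg_of_neg_of_pos (by linarith) h2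
  linarith

lemma aux_cpair_eq_zero_inner {x y : V} (hy : y ≠ 0) (h : cpair x y = 0) : ⟪x, y⟫ = 0 := by
  unfold cpair at h
  have h2 := (aux_ipos hy).ne'
  rcases div_eq_zero_iff.mp h with h | h
  · linarith
  · exact absurd h h2

lemma aux_cs_eq {a b : V} (ha : a ≠ 0)
    (heq : ⟪a,b⟫ * ⟪a,b⟫ = ⟪a,a⟫ * ⟪b,b⟫) : b = (⟪a,b⟫ / ⟪a,a⟫) • a := by
  have hna : (0:ℝ) < ⟪a,a⟫ := aux_ipos ha
  have hw : ⟪(⟪a,a⟫ • b - ⟪a,b⟫ • a : V), (⟪a,a⟫ • b - ⟪a,b⟫ • a : V)⟫ = 0 := by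
    rw [inner_sub_left, inner_sub_right, inner_sub_right, real_inner_smul_left,
      real_inner_smul_left, real_inner_smul_left, real_inner_smul_left,
      real_inner_smul_right, real_inner_smul_right, real_inner_smul_right,
      real_inner_smul_right]
    have hc : ⟪b,a⟫ = ⟪a,b⟫ := real_inner_comm a b
    linear_combination (-⟪a,a⟫ : ℝ) * heq + (-⟪a,a⟫*⟪a,b⟫ : ℝ) * hc
  have hw0 : (⟪a,a⟫ • b - ⟪a,b⟫ • a : V) = 0 := inner_self_eq_zero.mp hw
  have h1 : ⟪a,a⟫ • b = ⟪a,b⟫ • a := sub_eq_zero.mp hw0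
  have h2 := congrArg (fun v => (⟪a,a⟫)⁻¹ • v) h1
  simp only [smul_smul, inv_mul_cancel₀ hna.ne', one_smul] at h2
  rw [div_eq_inv_mul]; exact h2

lemma aux_neg_mem (D : RootSystemData V) {b : V} (hb : b ∈ D.roots) : -b ∈ D.roots := by
  have h := D.reflect_mem b hb b hb
  have hb0 : b ≠ 0 := D.ne_zero b hb
  have hnb := (aux_ipos hb0).ne'
  have hrefl : reflEnd b b = -b := by
    simp only [reflEnd, LinearMap.sub_apply, LinearMap.id_apply, LinearMap.comp_apply,
      LinearMap.smul_apply, ContinuousLinearMap.coe_coe, innerSL_apply_apply,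
      LinearMap.toSpanSingleton_apply, smul_smul]
    rw [smul_eq_mul, div_mul_cancel₀ _ hnb]
    module
  rwa [hrefl] at h

lemma aux_abs_cpair_le_two (D : RootSystemData V) (hG2 : D.NotG2)
    {a b : V} (ha : a ∈ D.roots) (hb : b ∈ D.roots) : |cpair a b| ≤ 2 := by
  have ha0 : a ≠ 0 := D.ne_zero a ha
  have hb0 : b ≠ 0 := D.ne_zero b hb
  have hna := aux_ipos ha0
  have hnb := aux_ipos hb0
  by_cases hdep : ⟪a,b⟫ * ⟪a,b⟫ = ⟪a,a⟫ * ⟪b,b⟫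
  · have hbt := aux_cs_eq ha0 hdep
    rcases D.reduced a ha _ (hbt ▸ hb) with ht | ht
    · rw [ht, one_smul] at hbt; rw [hbt, aux_cpair_self ha0]; norm_num
    · rw [ht] at hbt
      have hba : b = -a := by rw [hbt]; module
      rw [hba, aux_cpair_neg_right, aux_cpair_self ha0]; norm_num
  · have hCS : ⟪a,b⟫ * ⟪a,b⟫ < ⟪a,a⟫ * ⟪b,b⟫ :=
      lt_of_le_of_ne (real_inner_mul_inner_self_le a b) hdep
    obtain ⟨m, hm⟩ := D.crystallographic a ha b hb
    obtain ⟨n, hn⟩ := D.crystallographic b hb a ha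
    by_contra hcon
    push_neg at hcon
    have hm3 : 3 ≤ |m| := by
      rw [hm] at hcon
      rw [← Int.cast_abs] at hcon
      have : (2:ℤ) < |m| := by exact_mod_cast hcon
      omega
    have hab0 : ⟪a,b⟫ ≠ 0 := by
      intro h0
      rw [hm] at hcon
      unfold cpair at hm
      rw [h0] at hm
      simp at hm
      rw [← hm] at hcon
      norm_num at hcon
    have hn0 : n ≠ 0 := by
      intro h0
      rw [h0] at hn
      have := aux_cpair_eq_zero_inner ha0 (by rw [hn]; norm_num)
      rw [← real_inner_comm b a] at this
      exact hab0 this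
    have hprod : (m:ℝ) * n = 4 * (⟪a,b⟫*⟪a,b⟫) / (⟪a,a⟫*⟪b,b⟫) := by
      rw [← hm, ← hn]
      unfold cpair
      have hc : ⟪b,a⟫ = ⟪a,b⟫ := real_inner_comm a b
      rw [hc]
      field_simp
      ring
    have hlt : (m:ℝ) * n < 4 := by
      rw [hprod, div_lt_iff₀ (by positivity)]
      nlinarith [hCS]
    have hpos : (0:ℝ) < (m:ℝ) * n := by
      rw [hprod]
      apply div_pos
      · have : 0 < ⟪a,b⟫ * ⟪a,b⟫ := mul_self_pos.mpr hab0
        linarith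
      · positivity
    have h1 : 0 < m * n := by exact_mod_cast hpos
    have h2 : m * n < 4 := by exact_mod_cast hlt
    have hn1 : 1 ≤ |n| := Int.one_le_abs hn0
    have habs : |m| * |n| = m * n := by rw [← abs_mul, abs_of_pos h1]
    have hmeq : |m| = 3 ∧ |n| = 1 := by constructor <;> nlinarith
    have : m = 3 ∨ m = -3 := (abs_eq (by norm_num)).mp hmeq.1
    obtain ⟨g1, g2⟩ := hG2 a ha b hb
    rcases this with h | h <;> rw [h] at hm
    · exact g1 (by rw [hm]; norm_num)
    · exact g2 (by rw [hm]; norm_num)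

lemma aux_no_small (D : RootSystemData V) {x d : V} (hx : x ∈ D.roots) (hd : d ∈ D.roots)
    (h1 : ⟪x, d⟫ = ⟪x, x⟫) (h2 : 2 * ⟪x, x⟫ < ⟪d, d⟫) : False := by
  have hx0 : (0:ℝ) < ⟪x,x⟫ := aux_ipos (D.ne_zero x hx)
  have hd0 : (0:ℝ) < ⟪d,d⟫ := aux_ipos (D.ne_zero d hd)
  obtain ⟨n, hn⟩ := D.crystallographic x hx d hd
  unfold cpair at hn
  rw [h1] at hn
  have hlt : (n:ℝ) < 1 := by rw [← hn, div_lt_one hd0]; linarith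
  have hgt : (0:ℝ) < (n:ℝ) := by rw [← hn]; positivity
  have hz : (0:ℤ) < n := by exact_mod_cast hgt
  have : (1:ℝ) ≤ (n:ℝ) := by exact_mod_cast hz
  linarith

lemma aux_no_sum3 (D : RootSystemData V) (hG2 : D.NotG2)
    {d a b c : V} (hd : d ∈ D.roots)
    (har : a ∈ D.roots) (hbr : b ∈ D.roots) (hcr : c ∈ D.roots)
    (hba : 0 ≤ cpair b a) (hca : 0 ≤ cpair c a)
    (hab : 0 ≤ cpair a b) (hcb : 0 ≤ cpair c b)
    (hac : 0 ≤ cpair a c) (hbc : 0 ≤ cpair b c)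
    (hsum : d = a + b + c) : False := by
  have ha0 := D.ne_zero a har
  have hb0 := D.ne_zero b hbr
  have hc0 := D.ne_zero c hcr
  have e1 : cpair d a = 2 + cpair b a + cpair c a := by
    rw [hsum, aux_cpair_add_left, aux_cpair_add_left, aux_cpair_self ha0]
  have e2 : cpair d b = cpair a b + 2 + cpair c b := by
    rw [hsum, aux_cpair_add_left, aux_cpair_add_left, aux_cpair_self hb0]
  have e3 : cpair d c = cpair a c + cpair b c + 2 := by
    rw [hsum, aux_cpair_add_left, aux_cpair_add_left, aux_cpair_self hc0]
  have k1 := (abs_le.mp (aux_abs_cpair_le_two D hG2 hd har)).2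
  have k2 := (abs_le.mp (aux_abs_cpair_le_two D hG2 hd hbr)).2
  have k3 := (abs_le.mp (aux_abs_cpair_le_two D hG2 hd hcr)).2
  rw [e1] at k1; rw [e2] at k2; rw [e3] at k3
  have iba : ⟪b,a⟫ = 0 := aux_cpair_eq_zero_inner ha0 (by linarith)
  have ica : ⟪c,a⟫ = 0 := aux_cpair_eq_zero_inner ha0 (by linarith)
  have iab : ⟪a,b⟫ = 0 := aux_cpair_eq_zero_inner hb0 (by linarith)
  have icb : ⟪c,b⟫ = 0 := aux_cpair_eq_zero_inner hb0 (by linarith)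
  have iac : ⟪a,c⟫ = 0 := aux_cpair_eq_zero_inner hc0 (by linarith)
  have ibc : ⟪b,c⟫ = 0 := aux_cpair_eq_zero_inner hc0 (by linarith)
  have hdd : ⟪d,d⟫ = ⟪a,a⟫ + ⟪b,b⟫ + ⟪c,c⟫ := by
    rw [hsum]
    simp only [inner_add_left, inner_add_right, iba, ica, iab, icb, iac, ibc]
    ring
  have hda : ⟪a,d⟫ = ⟪a,a⟫ := by
    rw [hsum]; simp only [inner_add_right, iab, iac]; ring
  have hdb : ⟪b,d⟫ = ⟪b,b⟫ := by
    rw [hsum]; simp only [inner_add_right, iba, ibc]; ring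
  have hdc : ⟪c,d⟫ = ⟪c,c⟫ := by
    rw [hsum]; simp only [inner_add_right, ica, icb]; ring
  have pa := aux_ipos ha0
  have pb := aux_ipos hb0
  have pc := aux_ipos hc0
  rcases le_total ⟪a,a⟫ ⟪b,b⟫ with h1 | h1
  · rcases le_total ⟪a,a⟫ ⟪c,c⟫ with h2 | h2
    · exact aux_no_small D har hd hda (by rw [hdd]; linarith)
    · exact aux_no_small D hcr hd hdc (by rw [hdd]; linarith)
  · rcases le_total ⟪b,b⟫ ⟪c,c⟫ with h2 | h2
    · exact aux_no_small D hbr hd hdb (by rw [hdd]; linarith)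
    · exact aux_no_small D hcr hd hdc (by rw [hdd]; linarith)

lemma aux_no_sum4 (D : RootSystemData V) (hG2 : D.NotG2)
    {d a b c e : V} (hd : d ∈ D.roots)
    (har : a ∈ D.roots) (hbr : b ∈ D.roots) (hcr : c ∈ D.roots) (her : e ∈ D.roots)
    (hba : 0 ≤ cpair b a) (hca : 0 ≤ cpair c a) (hea : 0 ≤ cpair e a)
    (hab : 0 ≤ cpair a b) (hcb : 0 ≤ cpair c b) (heb : 0 ≤ cpair e b)
    (hac : 0 ≤ cpair a c) (hbc : 0 ≤ cpair b c) (hec : 0 ≤ cpair e c)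
    (hae : 0 ≤ cpair a e) (hbe : 0 ≤ cpair b e) (hce : 0 ≤ cpair c e)
    (hsum : d = a + b + c + e) : False := by
  have ha0 := D.ne_zero a har
  have hb0 := D.ne_zero b hbr
  have hc0 := D.ne_zero c hcr
  have he0 := D.ne_zero e her
  have e1 : cpair d a = 2 + cpair b a + cpair c a + cpair e a := by
    rw [hsum, aux_cpair_add_left, aux_cpair_add_left, aux_cpair_add_left,
      aux_cpair_self ha0]
  have e2 : cpair d b = cpair a b + 2 + cpair c b + cpair e b := by
    rw [hsum, aux_cpair_add_left, aux_cpair_add_left, aux_cpair_add_left,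
      aux_cpair_self hb0]
  have e3 : cpair d c = cpair a c + cpair b c + 2 + cpair e c := by
    rw [hsum, aux_cpair_add_left, aux_cpair_add_left, aux_cpair_add_left,
      aux_cpair_self hc0]
  have e4 : cpair d e = cpair a e + cpair b e + cpair c e + 2 := by
    rw [hsum, aux_cpair_add_left, aux_cpair_add_left, aux_cpair_add_left,
      aux_cpair_self he0]
  have k1 := (abs_le.mp (aux_abs_cpair_le_two D hG2 hd har)).2
  have k2 := (abs_le.mp (aux_abs_cpair_le_two D hG2 hd hbr)).2
  have k3 := (abs_le.mp (aux_abs_cpair_le_two D hG2 hd hcr)).2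
  have k4 := (abs_le.mp (aux_abs_cpair_le_two D hG2 hd her)).2
  rw [e1] at k1; rw [e2] at k2; rw [e3] at k3; rw [e4] at k4
  have iba : ⟪b,a⟫ = 0 := aux_cpair_eq_zero_inner ha0 (by linarith)
  have ica : ⟪c,a⟫ = 0 := aux_cpair_eq_zero_inner ha0 (by linarith)
  have iea : ⟪e,a⟫ = 0 := aux_cpair_eq_zero_inner ha0 (by linarith)
  have iab : ⟪a,b⟫ = 0 := aux_cpair_eq_zero_inner hb0 (by linarith)
  have icb : ⟪c,b⟫ = 0 := aux_cpair_eq_zero_inner hb0 (by linarith)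
  have ieb : ⟪e,b⟫ = 0 := aux_cpair_eq_zero_inner hb0 (by linarith)
  have iac : ⟪a,c⟫ = 0 := aux_cpair_eq_zero_inner hc0 (by linarith)
  have ibc : ⟪b,c⟫ = 0 := aux_cpair_eq_zero_inner hc0 (by linarith)
  have iec : ⟪e,c⟫ = 0 := aux_cpair_eq_zero_inner hc0 (by linarith)
  have iae : ⟪a,e⟫ = 0 := aux_cpair_eq_zero_inner he0 (by linarith)
  have ibe : ⟪b,e⟫ = 0 := aux_cpair_eq_zero_inner he0 (by linarith)
  have ice : ⟪c,e⟫ = 0 := aux_cpair_eq_zero_inner he0 (by linarith)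
  have hdd : ⟪d,d⟫ = ⟪a,a⟫ + ⟪b,b⟫ + ⟪c,c⟫ + ⟪e,e⟫ := by
    rw [hsum]
    simp only [inner_add_left, inner_add_right, iba, ica, iea, iab, icb, ieb,
      iac, ibc, iec, iae, ibe, ice]
    ring
  have hda : ⟪a,d⟫ = ⟪a,a⟫ := by
    rw [hsum]; simp only [inner_add_right, iab, iac, iae]; ring
  have hdb : ⟪b,d⟫ = ⟪b,b⟫ := by
    rw [hsum]; simp only [inner_add_right, iba, ibc, ibe]; ring
  have hdc : ⟪c,d⟫ = ⟪c,c⟫ := by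
    rw [hsum]; simp only [inner_add_right, ica, icb, ice]; ring
  have hde : ⟪e,d⟫ = ⟪e,e⟫ := by
    rw [hsum]; simp only [inner_add_right, iea, ieb, iec]; ring
  have pa := aux_ipos ha0
  have pb := aux_ipos hb0
  have pc := aux_ipos hc0
  have pe := aux_ipos he0
  rcases le_total ⟪a,a⟫ ⟪b,b⟫ with h1 | h1
  · rcases le_total ⟪a,a⟫ ⟪c,c⟫ with h2 | h2
    · rcases le_total ⟪a,a⟫ ⟪e,e⟫ with h3 | h3
      · exact aux_no_small D har hd hda (by rw [hdd]; linarith)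
      · exact aux_no_small D her hd hde (by rw [hdd]; linarith)
    · rcases le_total ⟪c,c⟫ ⟪e,e⟫ with h3 | h3
      · exact aux_no_small D hcr hd hdc (by rw [hdd]; linarith)
      · exact aux_no_small D her hd hde (by rw [hdd]; linarith)
  · rcases le_total ⟪b,b⟫ ⟪c,c⟫ with h2 | h2
    · rcases le_total ⟪b,b⟫ ⟪e,e⟫ with h3 | h3
      · exact aux_no_small D hbr hd hdb (by rw [hdd]; linarith)
      · exact aux_no_small D her hd hde (by rw [hdd]; linarith)
    · rcases le_total ⟪c,c⟫ ⟪e,e⟫ with h3 | h3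
      · exact aux_no_small D hcr hd hdc (by rw [hdd]; linarith)
      · exact aux_no_small D her hd hde (by rw [hdd]; linarith)


/-- Suppose `Φ` is irreducible and not of type `G₂`. Let
`γ₁, γ₂, γ₃, γ₄ ∈ Φ⁺` (not necessarily distinct) with `⟨γ_i, γ_j⟩ ≥ 0` for all
`i, j`, and `γ₁ + γ₂ + γ₃ + γ₄ = α - β` with `α, β ∈ Φ ∪ {0}`. Then `α` is a root
not among the `γ_i`, `-β` is a root not among the `γ_i`, and `{γ₁, γ₂, γ₃, γ₄}`
has at least two elements. -/
theorem roots_of_four_sum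
    {V : Type*} [NormedAddCommGroup V] [InnerProductSpace ℝ V]
    (D : RootSystemData V)
    (hirr : D.IsIrreducible) (hG2 : D.NotG2)
    (γ : Fin 4 → V) (hγ : ∀ i, γ i ∈ D.pos)
    (hpair : ∀ i j, 0 ≤ cpair (γ i) (γ j))
    (α β : V) (hα : α ∈ D.roots ∪ {0}) (hβ : β ∈ D.roots ∪ {0})
    (hsum : γ 0 + γ 1 + γ 2 + γ 3 = α - β) :
    (α ∈ D.roots ∧ α ∉ Set.range γ) ∧
      (-β ∈ D.roots ∧ -β ∉ Set.range γ) ∧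
      2 ≤ (Set.range γ).ncard := by
  have hγr : ∀ i, γ i ∈ D.roots := fun i => D.pos_subset (hγ i)
  have hγ0 : ∀ i, γ i ≠ 0 := fun i => D.ne_zero _ (hγr i)
  have hin : ∀ i j, 0 ≤ ⟪γ i, γ j⟫ := fun i j => aux_cpair_nonneg_inner (hγ0 j) (hpair i j)
  have hsum0 : γ 0 + γ 1 + γ 2 + γ 3 ≠ 0 := by
    intro h
    have h0 : (0:ℝ) < ⟪γ 0 + γ 1 + γ 2 + γ 3, γ 0⟫ := by
      rw [inner_add_left, inner_add_left, inner_add_left]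
      have := aux_ipos (hγ0 0)
      linarith [hin 1 0, hin 2 0, hin 3 0]
    rw [h, inner_zero_left] at h0
    exact lt_irrefl _ h0
  have hroots : α ∈ D.roots ∧ β ∈ D.roots := by
    rcases hα with hαr | hα0
    · rcases hβ with hβr | hβ0
      · exact ⟨hαr, hβr⟩
      · simp only [Set.mem_singleton_iff] at hβ0
        subst hβ0
        exfalso
        exact aux_no_sum4 D hG2 hαr (hγr 0) (hγr 1) (hγr 2) (hγr 3)
          (hpair 1 0) (hpair 2 0) (hpair 3 0) (hpair 0 1) (hpair 2 1) (hpair 3 1)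
          (hpair 0 2) (hpair 1 2) (hpair 3 2) (hpair 0 3) (hpair 1 3) (hpair 2 3)
          (by linear_combination (norm := module) -hsum)
    · simp only [Set.mem_singleton_iff] at hα0
      subst hα0
      rcases hβ with hβr | hβ0
      · exfalso
        exact aux_no_sum4 D hG2 (aux_neg_mem D hβr) (hγr 0) (hγr 1) (hγr 2) (hγr 3)
          (hpair 1 0) (hpair 2 0) (hpair 3 0) (hpair 0 1) (hpair 2 1) (hpair 3 1)
          (hpair 0 2) (hpair 1 2) (hpair 3 2) (hpair 0 3) (hpair 1 3) (hpair 2 3)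
          (by linear_combination (norm := module) -hsum)
      · simp only [Set.mem_singleton_iff] at hβ0
        subst hβ0
        exact absurd (by rw [hsum, sub_zero]) hsum0
  obtain ⟨hαr, hβr⟩ := hroots
  have hnβr : -β ∈ D.roots := aux_neg_mem D hβr
  have hαnot : α ∉ Set.range γ := by
    rintro ⟨k, hk⟩
    fin_cases k
    · have hk' : γ 0 = α := hk
      exact aux_no_sum3 D hG2 hnβr (hγr 1) (hγr 2) (hγr 3)
        (hpair 2 1) (hpair 3 1) (hpair 1 2) (hpair 3 2) (hpair 1 3) (hpair 2 3)
        (by linear_combination (norm := module) hk' - hsum)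
    · have hk' : γ 1 = α := hk
      exact aux_no_sum3 D hG2 hnβr (hγr 0) (hγr 2) (hγr 3)
        (hpair 2 0) (hpair 3 0) (hpair 0 2) (hpair 3 2) (hpair 0 3) (hpair 2 3)
        (by linear_combination (norm := module) hk' - hsum)
    · have hk' : γ 2 = α := hk
      exact aux_no_sum3 D hG2 hnβr (hγr 0) (hγr 1) (hγr 3)
        (hpair 1 0) (hpair 3 0) (hpair 0 1) (hpair 3 1) (hpair 0 3) (hpair 1 3)
        (by linear_combination (norm := module) hk' - hsum)
    · have hk' : γ 3 = α := hk
      exact aux_no_sum3 D hG2 hnβr (hγr 0) (hγr 1) (hγr 2)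
        (hpair 1 0) (hpair 2 0) (hpair 0 1) (hpair 2 1) (hpair 0 2) (hpair 1 2)
        (by linear_combination (norm := module) hk' - hsum)
  have hβnot : -β ∉ Set.range γ := by
    rintro ⟨k, hk⟩
    fin_cases k
    · have hk' : γ 0 = -β := hk
      exact aux_no_sum3 D hG2 hαr (hγr 1) (hγr 2) (hγr 3)
        (hpair 2 1) (hpair 3 1) (hpair 1 2) (hpair 3 2) (hpair 1 3) (hpair 2 3)
        (by linear_combination (norm := module) hk' - hsum)
    · have hk' : γ 1 = -β := hk
      exact aux_no_sum3 D hG2 hαr (hγr 0) (hγr 2) (hγr 3)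
        (hpair 2 0) (hpair 3 0) (hpair 0 2) (hpair 3 2) (hpair 0 3) (hpair 2 3)
        (by linear_combination (norm := module) hk' - hsum)
    · have hk' : γ 2 = -β := hk
      exact aux_no_sum3 D hG2 hαr (hγr 0) (hγr 1) (hγr 3)
        (hpair 1 0) (hpair 3 0) (hpair 0 1) (hpair 3 1) (hpair 0 3) (hpair 1 3)
        (by linear_combination (norm := module) hk' - hsum)
    · have hk' : γ 3 = -β := hk
      exact aux_no_sum3 D hG2 hαr (hγr 0) (hγr 1) (hγr 2)
        (hpair 1 0) (hpair 2 0) (hpair 0 1) (hpair 2 1) (hpair 0 2) (hpair 1 2)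
        (by linear_combination (norm := module) hk' - hsum)
  refine ⟨⟨hαr, hαnot⟩, ⟨hnβr, hβnot⟩, ?_⟩
  by_contra hlt
  push_neg at hlt
  have hne : (Set.range γ).Nonempty := Set.range_nonempty γ
  have hfin : (Set.range γ).Finite := Set.finite_range γ
  have h1 : (Set.range γ).ncard = 1 := by
    have := (Set.ncard_pos hfin).mpr hne
    omega
  obtain ⟨g, hg⟩ := Set.ncard_eq_one.mp h1
  have hgi : ∀ i, γ i = g := fun i => by
    have hmem : γ i ∈ Set.range γ := Set.mem_range_self i
    rw [hg] at hmem
    simpa using hmem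
  have hgr : g ∈ D.roots := by rw [← hgi 0]; exact hγr 0
  have hg0 : g ≠ 0 := D.ne_zero g hgr
  have h8 : cpair (α - β) g = 8 := by
    rw [← hsum, hgi 0, hgi 1, hgi 2, hgi 3, aux_cpair_add_left, aux_cpair_add_left,
      aux_cpair_add_left, aux_cpair_self hg0]
    norm_num
  rw [aux_cpair_sub_left] at h8
  have hb1 := abs_le.mp (aux_abs_cpair_le_two D hG2 hαr hgr)
  have hb2 := abs_le.mp (aux_abs_cpair_le_two D hG2 hβr hgr)
  linarith [hb1.2, hb2.1]
end
end

section
/- Suppose Φ is irreducible and not of type G₂. Let γ₁, γ₂, γ₃, γ₄ ∈ Φ⁺ (not necessarily distinct) satisfy ⟨γ_i,γ_j⟩ ≥ 0 for all i,j, set Γ = {γ₁,γ₂,γ₃,γ₄}, and suppose Γ is not orthogonal and γ₁+γ₂+γ₃+γ₄ = α − β for some α, β ∈ Φ. Then Φ is doubly laced, α = −β and α is a long root; moreover there is at most one index i₀ such that γ_{i₀} is a long root, and for such i₀ one has ⟨γ_{i₀},γ_j⟩ = 0 for all j ≠ i₀. -/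
/- Background setup: a finite reduced crystallographic root system `Φ` with chosen
positive roots `Φ⁺` in a euclidean space `V`, the Cartan pairing, and the basic
combinatorial notions used in the statement. -/

open scoped RealInnerProductSpace

noncomputable section

variable {V : Type*} [NormedAddCommGroup V] [InnerProductSpace ℝ V]

section Auxiliary

lemma reflEnd_apply' (β v : V) : reflEnd β v = v - ((2 / ⟪β, β⟫) * ⟪β, v⟫) • β := by
  simp [reflEnd, LinearMap.toSpanSingleton_apply]

lemma inner_self_pos' {x : V} (h : x ≠ 0) : 0 < ⟪x, x⟫ :=
  lt_of_le_of_ne real_inner_self_nonneg (fun e => h (inner_self_eq_zero.mp e.symm))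

lemma reflEnd_inner_self (β v : V) (hβ : β ≠ 0) :
    ⟪reflEnd β v, reflEnd β v⟫ = ⟪v, v⟫ := by
  have hb : ⟪β, β⟫ ≠ 0 := ne_of_gt (inner_self_pos' hβ)
  rw [reflEnd_apply', real_inner_sub_sub_self]
  rw [real_inner_smul_right, real_inner_smul_left, real_inner_smul_right,
    real_inner_comm v β]
  field_simp
  ring

variable (D : RootSystemData V)

namespace RootSystemData

lemma inner_self_pos {x : V} (hx : x ∈ D.roots) : 0 < ⟪x, x⟫ :=
  inner_self_pos' (D.ne_zero x hx)

lemma cpair_mul (x y : V) (hy : ⟪y, y⟫ ≠ 0) : cpair x y * ⟪y, y⟫ = 2 * ⟪x, y⟫ := by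
  rw [cpair]; field_simp

lemma neg_mem {x : V} (hx : x ∈ D.roots) : -x ∈ D.roots := by
  have h := D.reflect_mem x hx x hx
  rw [reflEnd_apply'] at h
  have hb : ⟪x, x⟫ ≠ 0 := ne_of_gt (D.inner_self_pos hx)
  rw [div_mul_cancel₀ _ hb] at h
  convert h using 1
  rw [two_smul]
  abel

/-- if the Cauchy-Schwarz equality holds, then y = ± x -/
lemma eq_or_neg_of_cs_eq {x y : V} (hx : x ∈ D.roots) (hy : y ∈ D.roots)
    (h : ⟪x, y⟫ * ⟪x, y⟫ = ⟪x, x⟫ * ⟪y, y⟫) : y = x ∨ y = -x := by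
  have hxx : 0 < ⟪x, x⟫ := D.inner_self_pos hx
  set t : ℝ := ⟪x, y⟫ / ⟪x, x⟫ with ht
  have hcm : ⟪y, x⟫ = ⟪x, y⟫ := real_inner_comm x y
  have hyx : y = t • x := by
    have hw : ⟪y - t • x, y - t • x⟫ = 0 := by
      rw [real_inner_sub_sub_self, real_inner_smul_right, real_inner_smul_left,
        real_inner_smul_right, hcm, ht]
      field_simp
      ring_nf
      nlinarith [h]
    exact sub_eq_zero.mp (inner_self_eq_zero.mp hw)
  rcases D.reduced x hx t (by rw [← hyx]; exact hy) with h1 | h1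
  · left; rw [hyx, h1, one_smul]
  · right; rw [hyx, h1, neg_smul, one_smul]

lemma cpair_prod_le_four (x y : V) : cpair x y * cpair y x ≤ 4 := by
  rcases eq_or_ne (⟪y, y⟫ : ℝ) 0 with h | h
  · unfold cpair; rw [h]; simp
  rcases eq_or_ne (⟪x, x⟫ : ℝ) 0 with h2 | h2
  · unfold cpair; rw [h2]; simp
  have hyy : 0 < ⟪y, y⟫ := lt_of_le_of_ne real_inner_self_nonneg (Ne.symm h)
  have hxx : 0 < ⟪x, x⟫ := lt_of_le_of_ne real_inner_self_nonneg (Ne.symm h2)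
  have hcs := real_inner_mul_inner_self_le x y
  have hcm : ⟪y, x⟫ = ⟪x, y⟫ := real_inner_comm x y
  rw [cpair, cpair, div_mul_div_comm, div_le_iff₀ (by positivity), hcm]
  nlinarith

lemma cpair_prod_nonneg (x y : V) : 0 ≤ cpair x y * cpair y x := by
  rcases eq_or_ne (⟪y, y⟫ : ℝ) 0 with h | h
  · unfold cpair; rw [h]; simp
  rcases eq_or_ne (⟪x, x⟫ : ℝ) 0 with h2 | h2
  · unfold cpair; rw [h2]; simp
  have hyy : 0 < ⟪y, y⟫ := lt_of_le_of_ne real_inner_self_nonneg (Ne.symm h)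
  have hxx : 0 < ⟪x, x⟫ := lt_of_le_of_ne real_inner_self_nonneg (Ne.symm h2)
  have hcm : ⟪y, x⟫ = ⟪x, y⟫ := real_inner_comm x y
  rw [cpair, cpair, div_mul_div_comm, hcm]
  apply div_nonneg
  · nlinarith [mul_self_nonneg (⟪x, y⟫ : ℝ)]
  · positivity

lemma cpair_eq_zero_iff {x y : V} (hx : x ∈ D.roots) (hy : y ∈ D.roots) :
    cpair x y = 0 ↔ ⟪x, y⟫ = 0 := by
  have hyy : 0 < ⟪y, y⟫ := D.inner_self_pos hy
  rw [cpair, div_eq_zero_iff]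
  constructor
  · rintro (h | h)
    · linarith
    · exact absurd h (ne_of_gt hyy)
  · intro h; left; rw [h]; ring

/-- product equal to 4 forces proportionality -/
lemma eq_or_neg_of_prod_eq_four {x y : V} (hx : x ∈ D.roots) (hy : y ∈ D.roots)
    (h : cpair x y * cpair y x = 4) : y = x ∨ y = -x := by
  have hxx : 0 < ⟪x, x⟫ := D.inner_self_pos hx
  have hyy : 0 < ⟪y, y⟫ := D.inner_self_pos hy
  have h1 := cpair_mul x y (ne_of_gt hyy)
  have h2 := cpair_mul y x (ne_of_gt hxx)
  have hcm : ⟪y, x⟫ = ⟪x, y⟫ := real_inner_comm x y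
  apply D.eq_or_neg_of_cs_eq hx hy
  have e1 : (cpair x y * ⟪y, y⟫) * (cpair y x * ⟪x, x⟫) = 4 * (⟪y, y⟫ * ⟪x, x⟫) := by
    linear_combination (⟪y, y⟫ * ⟪x, x⟫ : ℝ) * h
  rw [h1, h2, hcm] at e1
  linarith [e1]

/-- product of cpairs is at most two for non-proportional roots (no G2). -/
lemma cpair_prod_le_two (hG2 : D.NotG2) {x y : V} (hx : x ∈ D.roots) (hy : y ∈ D.roots)
    (h1 : y ≠ x) (h2 : y ≠ -x) : cpair x y * cpair y x ≤ 2 := by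
  obtain ⟨z1, hz1⟩ := D.crystallographic x hx y hy
  obtain ⟨z2, hz2⟩ := D.crystallographic y hy x hx
  rw [hz1, hz2]
  have h4 : z1 * z2 ≤ 4 := by
    have := cpair_prod_le_four x y
    rw [hz1, hz2] at this
    exact_mod_cast this
  have h0 : 0 ≤ z1 * z2 := by
    have := cpair_prod_nonneg x y
    rw [hz1, hz2] at this
    exact_mod_cast this
  have hne4 : z1 * z2 ≠ 4 := by
    intro hc
    have : cpair x y * cpair y x = 4 := by
      rw [hz1, hz2]; exact_mod_cast congrArg (fun n : ℤ => (n : ℝ)) hc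
    rcases D.eq_or_neg_of_prod_eq_four hx hy this with h | h
    · exact h1 h
    · exact h2 h
  have hne3 : z1 * z2 ≠ 3 := by
    intro hc
    have hd : z1 ∣ 3 := ⟨z2, hc.symm⟩
    have hb1 : z1 ≤ 3 := Int.le_of_dvd (by norm_num) hd
    have hb2 : -3 ≤ z1 := by
      have hd2 : -z1 ∣ (3 : ℤ) := (neg_dvd).mpr hd
      have := Int.le_of_dvd (by norm_num) hd2
      omega
    have hG2a := hG2 x hx y hy
    have hG2b := hG2 y hy x hx
    have hcases : (z1 = 1 ∧ z2 = 3) ∨ (z1 = 3 ∧ z2 = 1) ∨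
        (z1 = -1 ∧ z2 = -3) ∨ (z1 = -3 ∧ z2 = -1) := by
      interval_cases z1 <;> omega
    rcases hcases with ⟨_, h⟩ | ⟨h, _⟩ | ⟨_, h⟩ | ⟨h, _⟩
    · exact hG2b.1 (by rw [hz2, h]; norm_num)
    · exact hG2a.1 (by rw [hz1, h]; norm_num)
    · exact hG2b.2 (by rw [hz2, h]; norm_num)
    · exact hG2a.2 (by rw [hz1, h]; norm_num)
  obtain ⟨p, hp⟩ : ∃ p : ℤ, p = z1 * z2 := ⟨_, rfl⟩
  rw [← hp] at h4 h0 hne4 hne3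
  have : z1 * z2 ≤ 2 := by rw [← hp]; omega
  exact_mod_cast this

/-- all Cartan integers are between -2 and 2 (no G2). -/
lemma cpair_abs_le_two (hG2 : D.NotG2) {x y : V} (hx : x ∈ D.roots) (hy : y ∈ D.roots) :
    -2 ≤ cpair x y ∧ cpair x y ≤ 2 := by
  rcases eq_or_ne y x with rfl | h1
  · have : cpair y y = 2 := by
      rw [cpair, mul_div_assoc, div_self (ne_of_gt (D.inner_self_pos hy))]; ring
    rw [this]; norm_num
  rcases eq_or_ne y (-x) with rfl | h2
  · have hxx := D.inner_self_pos hx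
    have : cpair x (-x) = -2 := by
      rw [cpair, inner_neg_neg, inner_neg_right]
      rw [div_eq_iff (ne_of_gt hxx)]
      ring
    rw [this]; norm_num
  obtain ⟨z1, hz1⟩ := D.crystallographic x hx y hy
  obtain ⟨z2, hz2⟩ := D.crystallographic y hy x hx
  have hle2 : z1 * z2 ≤ 2 := by
    have := D.cpair_prod_le_two hG2 hx hy h1 h2
    rw [hz1, hz2] at this
    exact_mod_cast this
  have h0 : 0 ≤ z1 * z2 := by
    have := cpair_prod_nonneg x y
    rw [hz1, hz2] at this
    exact_mod_cast this
  have hiff : z1 = 0 ↔ z2 = 0 := by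
    have hyy := D.inner_self_pos hy
    have hxx := D.inner_self_pos hx
    have hcm : ⟪y, x⟫ = ⟪x, y⟫ := real_inner_comm x y
    have e1 : (z1 : ℝ) * ⟪y, y⟫ = 2 * ⟪x, y⟫ := by rw [← hz1]; exact cpair_mul x y (ne_of_gt hyy)
    have e2 : (z2 : ℝ) * ⟪x, x⟫ = 2 * ⟪x, y⟫ := by
      rw [← hz2, cpair_mul y x (ne_of_gt hxx), hcm]
    constructor
    · intro h; rw [h] at e1
      have : (z2 : ℝ) * ⟪x, x⟫ = 0 := by push_cast at e1 ⊢; linarith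
      have : (z2 : ℝ) = 0 := by
        rcases mul_eq_zero.mp this with h | h
        · exact h
        · exact absurd h (ne_of_gt hxx)
      exact_mod_cast this
    · intro h; rw [h] at e2
      have : (z1 : ℝ) * ⟪y, y⟫ = 0 := by push_cast at e2 ⊢; linarith
      have : (z1 : ℝ) = 0 := by
        rcases mul_eq_zero.mp this with h | h
        · exact h
        · exact absurd h (ne_of_gt hyy)
      exact_mod_cast this
  rw [hz1]
  have : -2 ≤ z1 ∧ z1 ≤ 2 := by
    rcases eq_or_ne z1 0 with rfl | hz
    · omega
    · have hz2ne : z2 ≠ 0 := fun h => hz (hiff.mpr h)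
      have h1 : 1 ≤ |z2| := Int.one_le_abs hz2ne
      have habs : |z1| ≤ 2 := by
        calc |z1| = |z1| * 1 := by ring
        _ ≤ |z1| * |z2| := mul_le_mul_of_nonneg_left h1 (abs_nonneg z1)
        _ = |z1 * z2| := (abs_mul z1 z2).symm
        _ = z1 * z2 := abs_of_nonneg h0
        _ ≤ 2 := hle2
      exact abs_le.mp habs
  exact ⟨by exact_mod_cast this.1, by exact_mod_cast this.2⟩

/-- In an irreducible system without G2 pairings, any two root lengths have
ratio 1 or 2. -/
lemma norm_ratio (hirr : D.IsIrreducible) (hG2 : D.NotG2) {x y : V}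
    (hx : x ∈ D.roots) (hy : y ∈ D.roots) :
    ⟪x, x⟫ = ⟪y, y⟫ ∨ ⟪y, y⟫ = 2 * ⟪x, x⟫ ∨ ⟪x, x⟫ = 2 * ⟪y, y⟫ := by
  classical
  -- the set of roots with the same length as x
  set L : Set V := {z | z ∈ D.roots ∧ ⟪z, z⟫ = ⟪x, x⟫} with hL
  set U : Submodule ℝ V := Submodule.span ℝ L with hU
  -- orthogonality to L extends to the span of L
  have hperp : ∀ b : V, (∀ z ∈ L, ⟪b, z⟫ = 0) → ∀ u ∈ U, ⟪b, u⟫ = 0 := by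
    intro b hb u hu
    have hsub : L ⊆ ((Submodule.span ℝ {b} : Submodule ℝ V)ᗮ : Set V) := by
      intro z hz
      exact Submodule.mem_orthogonal_singleton_iff_inner_right.mpr (hb z hz)
    have : U ≤ (Submodule.span ℝ {b})ᗮ := Submodule.span_le.mpr hsub
    exact Submodule.mem_orthogonal_singleton_iff_inner_right.mp (this hu)
  -- a root non-orthogonal to L lies in the span of L
  have hkey : ∀ b ∈ D.roots, (∃ z ∈ L, ⟪b, z⟫ ≠ 0) → b ∈ U := by
    rintro b hb ⟨z, hzL, hbz⟩
    have hz : z ∈ D.roots := hzL.1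
    have hbne : b ≠ 0 := D.ne_zero b hb
    have hrefl : reflEnd b z ∈ L := by
      refine ⟨D.reflect_mem z hz b hb, ?_⟩
      rw [reflEnd_inner_self b z hbne]
      exact hzL.2
    have hzU : z ∈ U := Submodule.subset_span hzL
    have hrU : reflEnd b z ∈ U := Submodule.subset_span hrefl
    have hdiff : z - reflEnd b z ∈ U := Submodule.sub_mem U hzU hrU
    rw [reflEnd_apply'] at hdiff
    have heq : z - (z - ((2 / ⟪b, b⟫) * ⟪b, z⟫) • b) = ((2 / ⟪b, b⟫) * ⟪b, z⟫) • b := by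
      abel
    rw [heq] at hdiff
    have hbb : (0:ℝ) < ⟪b, b⟫ := D.inner_self_pos hb
    have hco : ((2 / ⟪b, b⟫) * ⟪b, z⟫ : ℝ) ≠ 0 := by
      apply mul_ne_zero _ hbz
      positivity
    have := Submodule.smul_mem U ((2 / ⟪b, b⟫) * ⟪b, z⟫)⁻¹ hdiff
    rwa [inv_smul_smul₀ hco] at this
  -- by irreducibility, all roots lie in the span of L
  have hall : D.roots ⊆ (U : Set V) := by
    have hs := hirr.2 {v ∈ D.roots | v ∈ U} (fun v hv => hv.1) ?_
    · rcases hs with hs | hs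
      · exfalso
        have hxL : x ∈ ({v ∈ D.roots | v ∈ U} : Set V) :=
          ⟨hx, Submodule.subset_span ⟨hx, rfl⟩⟩
        rw [hs] at hxL
        exact hxL
      · intro v hv
        have : v ∈ ({v ∈ D.roots | v ∈ U} : Set V) := by rw [hs]; exact hv
        exact this.2
    · rintro v hv w ⟨hw, hwn⟩
      have hworth : ∀ z ∈ L, ⟪w, z⟫ = 0 := by
        intro z hz
        by_contra hne
        exact hwn ⟨hw, hkey w hw ⟨z, hz, hne⟩⟩
      rw [real_inner_comm]
      exact hperp w hworth v hv.2
  -- hence U is everything, so y is non-orthogonal to some z in L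
  have hUtop : U = ⊤ := by
    rw [hU, eq_top_iff, ← D.span_eq_top]
    exact Submodule.span_le.mpr hall
  obtain ⟨z, hzL, hzy⟩ : ∃ z ∈ L, ⟪y, z⟫ ≠ 0 := by
    by_contra hc
    push_neg at hc
    have : ⟪y, y⟫ = 0 := by
      apply hperp y hc y
      rw [hUtop]; trivial
    exact absurd (inner_self_eq_zero.mp this) (D.ne_zero y hy)
  -- now compare lengths of z and y via the Cartan integers
  have hz : z ∈ D.roots := hzL.1
  rw [← hzL.2]
  have hzy' : ⟪z, y⟫ ≠ 0 := by rwa [real_inner_comm] at hzy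
  have hzz : (0:ℝ) < ⟪z, z⟫ := D.inner_self_pos hz
  have hyy : (0:ℝ) < ⟪y, y⟫ := D.inner_self_pos hy
  obtain ⟨n1, hn1⟩ := D.crystallographic z hz y hy
  obtain ⟨n2, hn2⟩ := D.crystallographic y hy z hz
  have e1 : (n1 : ℝ) * ⟪y, y⟫ = 2 * ⟪z, y⟫ := by rw [← hn1]; exact cpair_mul z y (ne_of_gt hyy)
  have e2 : (n2 : ℝ) * ⟪z, z⟫ = 2 * ⟪z, y⟫ := by
    rw [← hn2, cpair_mul y z (ne_of_gt hzz), real_inner_comm]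
  have hn1ne : n1 ≠ 0 := by
    intro h; rw [h] at e1; push_cast at e1
    exact hzy' (by linarith)
  have hn2ne : n2 ≠ 0 := by
    intro h; rw [h] at e2; push_cast at e2
    exact hzy' (by linarith)
  have hb1 := D.cpair_abs_le_two hG2 hz hy
  have hb2 := D.cpair_abs_le_two hG2 hy hz
  rw [hn1] at hb1; rw [hn2] at hb2
  have hn1b : -2 ≤ n1 ∧ n1 ≤ 2 := by exact_mod_cast hb1
  have hn2b : -2 ≤ n2 ∧ n2 ≤ 2 := by exact_mod_cast hb2
  have hsign : 0 < n1 * n2 := by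
    have h0 : 0 ≤ cpair z y * cpair y z := cpair_prod_nonneg z y
    rw [hn1, hn2] at h0
    have h0' : 0 ≤ n1 * n2 := by exact_mod_cast h0
    rcases lt_or_eq_of_le h0' with h | h
    · exact h
    · exfalso; rcases mul_eq_zero.mp h.symm with h | h
      · exact hn1ne h
      · exact hn2ne h
  -- n1 * ⟪y,y⟫ = n2 * ⟪z,z⟫
  have hrel : (n1 : ℝ) * ⟪y, y⟫ = (n2 : ℝ) * ⟪z, z⟫ := by linarith
  have hprod4 : n1 * n2 = 4 → ⟪z, z⟫ = ⟪y, y⟫ := by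
    intro h
    have : cpair z y * cpair y z = 4 := by rw [hn1, hn2]; exact_mod_cast h
    rcases D.eq_or_neg_of_prod_eq_four hz hy this with h | h
    · rw [h]
    · rw [h]; simp
  have hcase : (n1 = n2) ∨ (n1 = 1 ∧ n2 = 2) ∨ (n1 = -1 ∧ n2 = -2) ∨
      (n1 = 2 ∧ n2 = 1) ∨ (n1 = -2 ∧ n2 = -1) ∨ (n1 * n2 = 4 ∧ n1 ≠ n2) := by
    obtain ⟨hn1l, hn1r⟩ := hn1b
    obtain ⟨hn2l, hn2r⟩ := hn2b
    interval_cases n1 <;> interval_cases n2 <;> omega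
  rcases hcase with h | ⟨ha, hb⟩ | ⟨ha, hb⟩ | ⟨ha, hb⟩ | ⟨ha, hb⟩ | ⟨h, _⟩
  · left
    rw [h] at hrel
    have hnn : (n2 : ℝ) ≠ 0 := by exact_mod_cast hn2ne
    exact (mul_left_cancel₀ hnn hrel).symm
  · right; left
    rw [ha, hb] at hrel; push_cast at hrel; linarith
  · right; left
    rw [ha, hb] at hrel; push_cast at hrel; linarith
  · right; right
    rw [ha, hb] at hrel; push_cast at hrel; linarith
  · right; right
    rw [ha, hb] at hrel; push_cast at hrel; linarith
  · left; exact hprod4 h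

end RootSystemData

lemma fin4_other : ∀ (a b : Fin 4), a ≠ b → ∃ c d : Fin 4,
    c ≠ a ∧ c ≠ b ∧ d ≠ a ∧ d ≠ b ∧ c ≠ d := by decide

lemma fin4_sum_eq (f : Fin 4 → ℝ) {a b c d : Fin 4} (hab : a ≠ b) (hac : a ≠ c)
    (had : a ≠ d) (hbc : b ≠ c) (hbd : b ≠ d) (hcd : c ≠ d) :
    f 0 + f 1 + f 2 + f 3 = f a + f b + f c + f d := by
  have hins : ({a, b, c, d} : Finset (Fin 4)) = Finset.univ := by
    apply Finset.eq_univ_of_card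
    rw [show ({a, b, c, d} : Finset (Fin 4)) = insert a (insert b (insert c {d})) from rfl]
    rw [Finset.card_insert_of_notMem (by simp [hab, hac, had]),
      Finset.card_insert_of_notMem (by simp [hbc, hbd]),
      Finset.card_insert_of_notMem (by simp [hcd]),
      Finset.card_singleton, Fintype.card_fin]
  calc f 0 + f 1 + f 2 + f 3 = ∑ i, f i := (Fin.sum_univ_four f).symm
  _ = ∑ i ∈ ({a, b, c, d} : Finset (Fin 4)), f i := by rw [hins]
  _ = f a + f b + f c + f d := by
      rw [show ({a, b, c, d} : Finset (Fin 4)) = insert a (insert b (insert c {d})) from rfl]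
      rw [Finset.sum_insert (by simp [hab, hac, had]),
        Finset.sum_insert (by simp [hbc, hbd]),
        Finset.sum_insert (by simp [hcd]),
        Finset.sum_singleton]
      ring

lemma fin4_cases (i : Fin 4) : i = 0 ∨ i = 1 ∨ i = 2 ∨ i = 3 := by
  revert i; decide

lemma fin4_term_le (E : Fin 4 → Fin 4 → ℝ) (hEnn : ∀ i j, 0 ≤ E i j)
    (i j : Fin 4) (hij : j ≠ i) :
    E j i ≤ E 0 i + E 1 i + E 2 i + E 3 i - E i i := by
  rcases fin4_cases i with rfl | rfl | rfl | rfl <;>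
    rcases fin4_cases j with rfl | rfl | rfl | rfl <;>
    first
    | exact absurd rfl hij
    |
    linarith [hEnn 0 0, hEnn 0 1, hEnn 0 2, hEnn 0 3, hEnn 1 0, hEnn 1 1, hEnn 1 2,
      hEnn 1 3, hEnn 2 0, hEnn 2 1, hEnn 2 2, hEnn 2 3, hEnn 3 0, hEnn 3 1,
      hEnn 3 2, hEnn 3 3]

lemma fin4_self_le (E : Fin 4 → Fin 4 → ℝ) (hEnn : ∀ i j, 0 ≤ E i j) (i : Fin 4) :
    E i i ≤ E 0 i + E 1 i + E 2 i + E 3 i := by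
  rcases fin4_cases i with rfl | rfl | rfl | rfl <;>
    linarith [hEnn 0 0, hEnn 0 1, hEnn 0 2, hEnn 0 3, hEnn 1 0, hEnn 1 1, hEnn 1 2,
      hEnn 1 3, hEnn 2 0, hEnn 2 1, hEnn 2 2, hEnn 2 3, hEnn 3 0, hEnn 3 1,
      hEnn 3 2, hEnn 3 3]

lemma fin4_mem (a b c d : Fin 4) (hab : a ≠ b) (hac : a ≠ c) (had : a ≠ d)
    (hbc : b ≠ c) (hbd : b ≠ d) (hcd : c ≠ d) (i : Fin 4) :
    i = a ∨ i = b ∨ i = c ∨ i = d := by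
  revert hab hac had hbc hbd hcd
  revert a b c d
  revert i
  decide

end Auxiliary

set_option maxHeartbeats 2000000

/-- Suppose `Φ` is irreducible and not of type `G₂`. Let
`γ₁, γ₂, γ₃, γ₄ ∈ Φ⁺` (not necessarily distinct) with `⟨γ_i, γ_j⟩ ≥ 0` for all
`i, j`, with `Γ = {γ₁, γ₂, γ₃, γ₄}` not orthogonal, and suppose
`γ₁ + γ₂ + γ₃ + γ₄ = α - β` for some roots `α, β`. Then `Φ` is doubly laced,
`α = -β` is a long root, there is at most one index `i₀` with `γ_{i₀}` long, and
for such `i₀` one has `⟨γ_{i₀}, γ_j⟩ = 0` for all `j ≠ i₀`. -/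
theorem four_sum_not_orthogonal
    {V : Type*} [NormedAddCommGroup V] [InnerProductSpace ℝ V]
    (D : RootSystemData V)
    (hirr : D.IsIrreducible) (hG2 : D.NotG2)
    (γ : Fin 4 → V) (hγ : ∀ i, γ i ∈ D.pos)
    (hpair : ∀ i j, 0 ≤ cpair (γ i) (γ j))
    (hnotorth : ¬ OrthogonalSet (Set.range γ))
    (α β : V) (hα : α ∈ D.roots) (hβ : β ∈ D.roots)
    (hsum : γ 0 + γ 1 + γ 2 + γ 3 = α - β) :
    D.DoublyLaced ∧ α = -β ∧ D.IsLong α ∧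
      (∀ i j, D.IsLong (γ i) → D.IsLong (γ j) → i = j) ∧
      (∀ i, D.IsLong (γ i) → ∀ j, j ≠ i → cpair (γ i) (γ j) = 0) := by
  classical
  obtain ⟨x₀, hx₀, hmin⟩ :=
    Set.exists_min_image D.roots (fun z => ⟪z, z⟫) D.finite ⟨α, hα⟩
  set m : ℝ := ⟪x₀, x₀⟫ with hmdef
  have hm : 0 < m := D.inner_self_pos hx₀
  have hroots : ∀ i, γ i ∈ D.roots := fun i => D.pos_subset (hγ i)
  have hdich : ∀ x ∈ D.roots, ⟪x, x⟫ = m ∨ ⟪x, x⟫ = 2 * m := by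
    intro x hx
    rcases D.norm_ratio hirr hG2 hx₀ hx with h | h | h
    · left; exact h.symm
    · right; exact h
    · exfalso; have := hmin x hx; linarith
  -- the non-orthogonal pair of distinct roots
  rw [OrthogonalSet] at hnotorth; push_neg at hnotorth
  obtain ⟨u, hu, v, hv, huv, hcuv⟩ := hnotorth
  obtain ⟨a, ha⟩ := hu
  obtain ⟨b, hb⟩ := hv
  subst ha; subst hb
  have habi : a ≠ b := fun h => huv (congrArg γ h)
  obtain ⟨c, d, hca, hcb, hda, hdb, hcd⟩ := fin4_other a b habi
  -- inner products
  set E : Fin 4 → Fin 4 → ℝ := fun i j => ⟪γ i, γ j⟫ with hE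
  have hEnn : ∀ i j, 0 ≤ E i j := by
    intro i j
    have hp := hpair i j
    have hjj : (0:ℝ) < ⟪γ j, γ j⟫ := D.inner_self_pos (hroots j)
    rw [cpair] at hp
    rcases div_nonneg_iff.mp hp with ⟨h1, _⟩ | ⟨_, h2⟩
    · simp only [hE]; linarith
    · linarith
  have hEsym : ∀ i j, E i j = E j i := fun i j => real_inner_comm (γ j) (γ i)
  have hEge : ∀ i, m ≤ E i i := fun i => hmin _ (hroots i)
  have hEdich : ∀ i, E i i = m ∨ E i i = 2 * m := fun i => hdich _ (hroots i)
  have hEpos : ∀ i, 0 < E i i := fun i => D.inner_self_pos (hroots i)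
  have hzint : ∀ i j, ∃ z : ℤ, 2 * E i j = z * E j j := by
    intro i j
    obtain ⟨z, hz⟩ := D.crystallographic _ (hroots i) _ (hroots j)
    refine ⟨z, ?_⟩
    have := RootSystemData.cpair_mul (γ i) (γ j) (ne_of_gt (hEpos j))
    rw [hz] at this
    simp only [hE]
    linarith
  -- the special pair has positive inner product bounded below
  have hEabpos : 0 < E a b := by
    rcases lt_or_eq_of_le (hEnn a b) with h | h
    · exact h
    · exfalso
      apply hcuv
      rw [(D.cpair_eq_zero_iff (hroots a) (hroots b))]
      simp only [hE] at h
      exact h.symm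
  have hEab1 : E b b ≤ 2 * E a b := by
    obtain ⟨z, hz⟩ := hzint a b
    have hzpos : 0 < z := by
      have : (0:ℝ) < z * E b b := by rw [← hz]; linarith
      by_contra hc
      push_neg at hc
      have : (z:ℝ) ≤ 0 := by exact_mod_cast hc
      nlinarith [hEpos b]
    have : (1:ℝ) ≤ z := by exact_mod_cast hzpos
    nlinarith [hEpos b]
  have hEab2 : E a a ≤ 2 * E a b := by
    obtain ⟨z, hz⟩ := hzint b a
    rw [← hEsym a b] at hz
    have hzpos : 0 < z := by
      have : (0:ℝ) < z * E a a := by rw [← hz]; linarith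
      by_contra hc
      push_neg at hc
      have : (z:ℝ) ≤ 0 := by exact_mod_cast hc
      nlinarith [hEpos a]
    have : (1:ℝ) ≤ z := by exact_mod_cast hzpos
    nlinarith [hEpos a]
  -- decomposition of inner products against the sum
  have hsv : ∀ w : V, ⟪α - β, w⟫ = ⟪γ 0, w⟫ + ⟪γ 1, w⟫ + ⟪γ 2, w⟫ + ⟪γ 3, w⟫ := by
    intro w; rw [← hsum]
    rw [inner_add_left, inner_add_left, inner_add_left]
  have hsg : ∀ i, ⟪α - β, γ i⟫ = E 0 i + E 1 i + E 2 i + E 3 i := by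
    intro i; simp only [hE]; exact hsv (γ i)
  have hTot : ⟪α - β, α - β⟫ =
      ⟪α - β, γ a⟫ + ⟪α - β, γ b⟫ + ⟪α - β, γ c⟫ + ⟪α - β, γ d⟫ := by
    have h1 : ⟪α - β, α - β⟫ =
        ⟪α - β, γ 0⟫ + ⟪α - β, γ 1⟫ + ⟪α - β, γ 2⟫ + ⟪α - β, γ 3⟫ := by
      have h2 := hsv (α - β)
      rw [real_inner_comm (α - β) (γ 0), real_inner_comm (α - β) (γ 1),
        real_inner_comm (α - β) (γ 2), real_inner_comm (α - β) (γ 3)] at h2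
      exact h2
    rw [h1]
    exact fin4_sum_eq (fun i => ⟪α - β, γ i⟫) habi hca.symm hda.symm hcb.symm hdb.symm hcd
  have hterm : ∀ i j, j ≠ i → E j i ≤ ⟪α - β, γ i⟫ - E i i := by
    intro i j hij; rw [hsg i]; exact fin4_term_le E hEnn i j hij
  have hself : ∀ i, E i i ≤ ⟪α - β, γ i⟫ := by
    intro i; rw [hsg i]; exact fin4_self_le E hEnn i
  have hsga : E a a + E a b ≤ ⟪α - β, γ a⟫ := by
    have := hterm a b habi.symm
    rw [hEsym b a] at this
    linarith
  have hsgb : E b b + E a b ≤ ⟪α - β, γ b⟫ := by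
    have := hterm b a habi
    linarith
  have hlow : 5 * m ≤ ⟪α - β, α - β⟫ := by
    rw [hTot]
    have h3 := hself c
    have h4 := hself d
    have := hEge a; have := hEge b; have := hEge c; have := hEge d
    linarith
  by_cases hbeqa : β = α
  · exfalso
    rw [hbeqa, sub_self] at hlow
    rw [inner_zero_left] at hlow
    linarith
  by_cases hbnega : β = -α
  · -- the main case : α - β = 2 α
    have hS2 : α - β = α + α := by rw [hbnega, sub_neg_eq_add]
    have hSS : ⟪α - β, α - β⟫ = 4 * ⟪α, α⟫ := by
      rw [hS2, inner_add_left, inner_add_right]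
      ring
    have hna : ⟪α, α⟫ = 2 * m := by
      rcases hdich α hα with h | h
      · exfalso; rw [hSS, h] at hlow; linarith
      · exact h
    set A : Fin 4 → ℝ := fun i => ⟪γ i, α⟫ with hA
    have hsgA : ∀ i, ⟪α - β, γ i⟫ = 2 * A i := by
      intro i
      rw [hS2, inner_add_left, real_inner_comm (γ i) α]
      simp only [hA]
      ring
    have hcpA : ∀ i, cpair α (γ i) * E i i = 2 * A i := by
      intro i
      have h1 := RootSystemData.cpair_mul α (γ i) (ne_of_gt (hEpos i))
      rw [real_inner_comm (γ i) α] at h1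
      simp only [hE, hA]
      exact h1
    have hAz : ∀ i, ∃ z : ℤ, A i = z * m := by
      intro i
      obtain ⟨z, hz⟩ := D.crystallographic _ (hroots i) α hα
      have h1 := RootSystemData.cpair_mul (γ i) α (ne_of_gt (D.inner_self_pos hα))
      rw [hz, hna] at h1
      exact ⟨z, by simp only [hA]; linarith⟩
    have hApos : ∀ i, m / 2 ≤ A i := by
      intro i
      have h1 := hself i
      have h2 := hEge i
      have h3 := hsgA i
      linarith
    have hclass : ∀ i, (E i i = m ∧ A i = m) ∨ (E i i = 2 * m ∧ A i = m) ∨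
        (γ i = α ∧ A i = 2 * m) := by
      intro i
      obtain ⟨z, hz⟩ := hAz i
      have hzge : 1 ≤ z := by
        have h1 := hApos i
        rw [hz] at h1
        have hzpos : (0:ℝ) < z := by nlinarith
        have : 0 < z := by exact_mod_cast hzpos
        omega
      have hbnd := D.cpair_abs_le_two hG2 hα (hroots i)
      have hcpAi := hcpA i
      rcases hEdich i with h | h
      · left
        refine ⟨h, ?_⟩
        have hcp : cpair α (γ i) = 2 * z := by
          rw [h, hz] at hcpAi
          have : cpair α (γ i) * m = (2 * z) * m := by push_cast; linarith
          exact mul_right_cancel₀ (ne_of_gt hm) this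
        have : (2 : ℝ) * z ≤ 2 := by rw [← hcp]; exact hbnd.2
        have hz1 : z ≤ 1 := by
          have : (z : ℝ) ≤ 1 := by linarith
          exact_mod_cast this
        have : z = 1 := le_antisymm hz1 hzge
        rw [hz, this]; push_cast; ring
      · have hcp : cpair α (γ i) = z := by
          rw [h, hz] at hcpAi
          have : cpair α (γ i) * (2 * m) = (z : ℝ) * (2 * m) := by push_cast; linarith
          exact mul_right_cancel₀ (by positivity) this
        have hz2 : z ≤ 2 := by
          have : (z : ℝ) ≤ 2 := by rw [← hcp]; exact hbnd.2
          exact_mod_cast this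
        interval_cases z
        · right; left
          refine ⟨h, by rw [hz]; push_cast; ring⟩
        · right; right
          have hA2 : A i = 2 * m := by rw [hz]; push_cast; ring
          refine ⟨?_, hA2⟩
          have hw : ⟪γ i - α, γ i - α⟫ = 0 := by
            rw [real_inner_sub_sub_self]
            have : (⟪γ i, γ i⟫ : ℝ) = E i i := by simp only [hE]
            rw [this, h, hna]
            have : (⟪γ i, α⟫ : ℝ) = A i := by simp only [hA]
            rw [this, hA2]
            ring
          exact sub_eq_zero.mp (inner_self_eq_zero.mp hw)
    have hclass2 : ∀ i, 2 * m ≤ ⟪α - β, γ i⟫ := by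
      intro i
      rw [hsgA i]
      rcases hclass i with ⟨_, h⟩ | ⟨_, h⟩ | ⟨_, h⟩ <;> rw [h] <;> linarith
    have hnoalpha : ∀ i, γ i ≠ α := by
      intro i hieq
      have hAi : A i = 2 * m := by
        simp only [hA]; rw [hieq, hna]
      have h4 : ⟪α - β, γ i⟫ = 4 * m := by rw [hsgA i, hAi]; ring
      have h8 : ⟪α - β, α - β⟫ = 8 * m := by rw [hSS, hna]; ring
      rcases fin4_mem a b c d habi hca.symm hda.symm hcb.symm hdb.symm hcd i with
        h | h | h | h <;>
        rw [h] at h4 <;>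
        linarith [hclass2 a, hclass2 b, hclass2 c, hclass2 d, hTot, h8]
    have hclass' : ∀ i, (E i i = m ∨ E i i = 2 * m) ∧ ⟪α - β, γ i⟫ = 2 * m := by
      intro i
      rcases hclass i with ⟨h1, h2⟩ | ⟨h1, h2⟩ | ⟨h1, _⟩
      · exact ⟨Or.inl h1, by rw [hsgA i, h2]⟩
      · exact ⟨Or.inr h1, by rw [hsgA i, h2]⟩
      · exact absurd h1 (hnoalpha i)
    -- a long γ i is orthogonal to all others
    have hzero : ∀ i, E i i = 2 * m → ∀ j, j ≠ i → E j i = 0 := by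
      intro i h2 j hji
      have h3 := hterm i j hji
      rw [(hclass' i).2, h2] at h3
      have h4 := hEnn j i
      linarith
    have hlongE : ∀ i, D.IsLong (γ i) → E i i = 2 * m := by
      intro i hli
      have h1 := hli.2 α hα
      rw [hna] at h1
      have h2 : (⟪γ i, γ i⟫ : ℝ) = E i i := by simp only [hE]
      rw [h2] at h1
      rcases hEdich i with h | h
      · linarith
      · exact h
    have claim5 : ∀ i, D.IsLong (γ i) → ∀ j, j ≠ i → cpair (γ i) (γ j) = 0 := by
      intro i hli j hji
      have h0 : E j i = 0 := hzero i (hlongE i hli) j hji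
      rw [(D.cpair_eq_zero_iff (hroots i) (hroots j))]
      have : E i j = 0 := by rw [hEsym i j]; exact h0
      simp only [hE] at this
      exact this
    -- there is at most one long γ
    have claim4 : ∀ i j, D.IsLong (γ i) → D.IsLong (γ j) → i = j := by
      intro i j hli hlj
      by_contra hij
      have h2i := hlongE i hli
      have h2j := hlongE j hlj
      have hxa : 0 < ⟪α - β, γ a⟫ - E a a := by
        have := hterm a b habi.symm
        rw [hEsym b a] at this
        linarith
      have hxb : 0 < ⟪α - β, γ b⟫ - E b b := by
        have := hterm b a habi
        linarith
      have hai : a ≠ i := by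
        intro h; rw [h] at hxa; rw [(hclass' i).2, h2i] at hxa; linarith
      have haj : a ≠ j := by
        intro h; rw [h] at hxa; rw [(hclass' j).2, h2j] at hxa; linarith
      have hbi : b ≠ i := by
        intro h; rw [h] at hxb; rw [(hclass' i).2, h2i] at hxb; linarith
      have hbj : b ≠ j := by
        intro h; rw [h] at hxb; rw [(hclass' j).2, h2j] at hxb; linarith
      have hEaa : E a a = m := by
        rcases (hclass' a).1 with h | h
        · exact h
        · exfalso; rw [(hclass' a).2] at hxa; rw [h] at hxa; linarith
      have hEbb : E b b = m := by
        rcases (hclass' b).1 with h | h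
        · exact h
        · exfalso; rw [(hclass' b).2] at hxb; rw [h] at hxb; linarith
      have hEia : E i a = 0 := by
        have h := hzero i h2i a hai
        rw [hEsym i a]; exact h
      have hEja : E j a = 0 := by
        have h := hzero j h2j a haj
        rw [hEsym j a]; exact h
      have hdecomp : E 0 a + E 1 a + E 2 a + E 3 a = E a a + E b a + E i a + E j a :=
        fin4_sum_eq (fun t => E t a) habi hai haj hbi hbj hij
      have hsum_a : ⟪α - β, γ a⟫ = E a a + E b a + E i a + E j a := by
        rw [hsg a]; exact hdecomp
      have hEba : E b a = m := by
        rw [(hclass' a).2, hEaa, hEia, hEja] at hsum_a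
        linarith
      have hw : ⟪γ a - γ b, γ a - γ b⟫ = 0 := by
        rw [real_inner_sub_sub_self]
        have e1 : (⟪γ a, γ a⟫ : ℝ) = E a a := by simp only [hE]
        have e2 : (⟪γ b, γ b⟫ : ℝ) = E b b := by simp only [hE]
        have e3 : (⟪γ a, γ b⟫ : ℝ) = E a b := by simp only [hE]
        rw [e1, e2, e3, hEaa, hEbb, ← hEsym a b] at *
        rw [hEba]
        ring
      exact absurd (sub_eq_zero.mp (inner_self_eq_zero.mp hw)) huv
    refine ⟨⟨⟨x₀, hx₀, α, hα, ?_⟩, fun x hx y hy => D.norm_ratio hirr hG2 hx hy⟩,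
      by rw [hbnega, neg_neg], ⟨hα, fun y hy => ?_⟩, claim4, claim5⟩
    · rw [hna]
    · rcases hdich y hy with h | h <;> rw [h, hna] <;> linarith
  · -- remaining case : contradiction
    exfalso
    have hδ : -β ∈ D.roots := D.neg_mem hβ
    have hδne1 : -β ≠ α := fun h => hbnega (by rw [← h, neg_neg])
    have hδne2 : -β ≠ -α := fun h => hbeqa (neg_injective h)
    have hSd : α - β = α + -β := sub_eq_add_neg α β
    have hSS' : ⟪α - β, α - β⟫ = ⟪α, α⟫ + ⟪-β, -β⟫ + 2 * ⟪α, -β⟫ := by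
      rw [hSd, inner_add_left, inner_add_right, inner_add_right,
        real_inner_comm α (-β)]
      ring
    -- the mixed-length configuration is impossible
    have ML : ∀ σ lam : V, σ ∈ D.roots → lam ∈ D.roots → ⟪σ, σ⟫ = m →
        ⟪lam, lam⟫ = 2 * m → ⟪σ, lam⟫ = m → α - β = σ + lam → False := by
      intro σ lam hσ hlam hnσ hnlam hsl hdecomp
      have hS5 : ⟪α - β, α - β⟫ = 5 * m := by
        rw [hdecomp, inner_add_left, inner_add_right, inner_add_right,
          real_inner_comm σ lam, hnσ, hnlam, hsl]
        ring
      have hsplit : ∀ i, ⟪α - β, γ i⟫ = ⟪γ i, σ⟫ + ⟪γ i, lam⟫ := by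
        intro i
        rw [hdecomp, inner_add_left, real_inner_comm (γ i) σ, real_inner_comm (γ i) lam]
      have hEm : ∀ i, E i i = m := by
        intro i
        rcases fin4_mem a b c d habi hca.symm hda.symm hcb.symm hdb.symm hcd i with
          h | h | h | h <;> rw [h] <;>
          [rcases hEdich a with h2 | h2; rcases hEdich b with h2 | h2;
            rcases hEdich c with h2 | h2; rcases hEdich d with h2 | h2] <;>
          first
          | exact h2
          | (exfalso
             rw [hS5] at hTot
             linarith [hself c, hself d, hEge a, hEge b, hEge c, hEge d])
      have hdval : ∀ i, ⟪γ i, lam⟫ = m := by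
        intro i
        obtain ⟨z, hz⟩ := D.crystallographic _ (hroots i) lam hlam
        have e1 := RootSystemData.cpair_mul (γ i) lam
          (ne_of_gt (D.inner_self_pos hlam))
        rw [hz, hnlam] at e1
        have hdi : ⟪γ i, lam⟫ = z * m := by linarith
        have hbnd := D.cpair_abs_le_two hG2 hlam (hroots i)
        have e2 := RootSystemData.cpair_mul lam (γ i) (ne_of_gt (hEpos i))
        rw [real_inner_comm (γ i) lam] at e2
        have hEiim : (⟪γ i, γ i⟫ : ℝ) = m := by
          have : (⟪γ i, γ i⟫ : ℝ) = E i i := by simp only [hE]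
          rw [this, hEm i]
        rw [hEiim, hdi] at e2
        have hcp2 : cpair lam (γ i) = 2 * z := by
          have : cpair lam (γ i) * m = (2 * z) * m := by push_cast; linarith
          exact mul_right_cancel₀ (ne_of_gt hm) this
        have hzb : -1 ≤ z ∧ z ≤ 1 := by
          rw [hcp2] at hbnd
          constructor
          · have : (-2 : ℝ) ≤ 2 * z := hbnd.1
            have : (-1 : ℝ) ≤ z := by linarith
            exact_mod_cast this
          · have : (2 : ℝ) * z ≤ 2 := hbnd.2
            have : (z : ℝ) ≤ 1 := by linarith
            exact_mod_cast this
        have hsi := hself i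
        rw [hsplit i] at hsi
        have hale : ⟪γ i, σ⟫ ≤ m := by
          have hnn := real_inner_self_nonneg (x := γ i - σ)
          rw [real_inner_sub_sub_self] at hnn
          have hEii : (⟪γ i, γ i⟫ : ℝ) = m := hEiim
          rw [hEii, hnσ] at hnn
          linarith
        obtain ⟨hz1, hz2⟩ := hzb
        interval_cases z
        · exfalso
          rw [hEm i] at hsi
          push_cast at hdi
          linarith
        · exfalso
          push_cast at hdi
          have hai : ⟪γ i, σ⟫ = m := by
            rw [hEm i] at hsi
            linarith
          have hw : ⟪γ i - σ, γ i - σ⟫ = 0 := by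
            rw [real_inner_sub_sub_self, hEiim, hnσ, hai]
            ring
          have hγσ : γ i = σ := sub_eq_zero.mp (inner_self_eq_zero.mp hw)
          rw [hγσ, hsl] at hdi
          linarith
        · rw [hdi]; push_cast; ring
      have hSlam : ⟪α - β, lam⟫ = 3 * m := by
        rw [hdecomp, inner_add_left, hsl, hnlam]
        ring
      have h1 := hsv lam
      rw [hdval 0, hdval 1, hdval 2, hdval 3, hSlam] at h1
      linarith
    -- the long-long configuration is impossible
    have LL : ⟪α, α⟫ = 2 * m → ⟪-β, -β⟫ = 2 * m → ⟪α, -β⟫ = m → False := by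
      intro hnα hnδ hA0
      have hS6 : ⟪α - β, α - β⟫ = 6 * m := by rw [hSS', hnα, hnδ, hA0]; ring
      have hsplit : ∀ i, ⟪α - β, γ i⟫ = ⟪γ i, α⟫ + ⟪γ i, -β⟫ := by
        intro i
        rw [hSd, inner_add_left, real_inner_comm (γ i) α, real_inner_comm (γ i) (-β)]
      have hvalint : ∀ i, ∃ z : ℤ, ⟪γ i, α⟫ + ⟪γ i, -β⟫ = z * m := by
        intro i
        obtain ⟨z1, hz1⟩ := D.crystallographic _ (hroots i) α hα
        obtain ⟨z2, hz2⟩ := D.crystallographic _ (hroots i) (-β) hδ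
        have e1 := RootSystemData.cpair_mul (γ i) α (ne_of_gt (D.inner_self_pos hα))
        have e2 := RootSystemData.cpair_mul (γ i) (-β) (ne_of_gt (D.inner_self_pos hδ))
        rw [hz1, hnα] at e1
        rw [hz2, hnδ] at e2
        refine ⟨z1 + z2, ?_⟩
        push_cast
        linarith
      have hEaam : E a a = m := by
        rcases hEdich a with h | h
        · exact h
        · exfalso
          rw [hS6] at hTot
          linarith [hself c, hself d, hEge b, hEge c, hEge d, hsga, hsgb, hEab2]
      have hEbbm : E b b = m := by
        rcases hEdich b with h | h
        · exact h
        · exfalso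
          rw [hS6] at hTot
          linarith [hself c, hself d, hEge a, hEge c, hEge d, hsga, hsgb, hEab1]
      have hxa : m ≤ ⟪α - β, γ a⟫ - E a a := by
        obtain ⟨z, hz⟩ := hvalint a
        have hsa : ⟪α - β, γ a⟫ = z * m := by rw [hsplit a]; exact hz
        have h1 : E a b ≤ ⟪α - β, γ a⟫ - E a a := by
          have := hterm a b habi.symm
          rw [hEsym b a] at this
          exact this
        have h2 : m / 2 ≤ E a b := by
          have := hEab2; rw [hEaam] at this; linarith
        have hzge : 2 ≤ z := by
          have h3 : (3 : ℝ) / 2 * m ≤ (z : ℝ) * m := by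
            rw [hsa, hEaam] at h1
            linarith
          have h4 : (3 : ℝ) / 2 ≤ (z : ℝ) := by nlinarith
          have h5 : (1 : ℤ) < z := by exact_mod_cast show (1 : ℝ) < (z : ℝ) by linarith
          omega
        rw [hsa, hEaam]
        have : (2 : ℝ) ≤ z := by exact_mod_cast hzge
        nlinarith
      have hxb : m ≤ ⟪α - β, γ b⟫ - E b b := by
        obtain ⟨z, hz⟩ := hvalint b
        have hsb : ⟪α - β, γ b⟫ = z * m := by rw [hsplit b]; exact hz
        have h1 : E a b ≤ ⟪α - β, γ b⟫ - E b b := hterm b a habi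
        have h2 : m / 2 ≤ E a b := by
          have := hEab1; rw [hEbbm] at this; linarith
        have hzge : 2 ≤ z := by
          have h3 : (3 : ℝ) / 2 * m ≤ (z : ℝ) * m := by
            rw [hsb, hEbbm] at h1
            linarith
          have h4 : (3 : ℝ) / 2 ≤ (z : ℝ) := by nlinarith
          have h5 : (1 : ℤ) < z := by exact_mod_cast show (1 : ℝ) < (z : ℝ) by linarith
          omega
        rw [hsb, hEbbm]
        have : (2 : ℝ) ≤ z := by exact_mod_cast hzge
        nlinarith
      have hxc : ⟪α - β, γ c⟫ - E c c = 0 := by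
        rw [hS6] at hTot
        have := hself c; have := hself d; have := hEge c; have := hEge d
        linarith
      have hxd : ⟪α - β, γ d⟫ - E d d = 0 := by
        rw [hS6] at hTot
        have := hself c; have := hself d; have := hEge c; have := hEge d
        linarith
      have hEca : E c a = 0 := by
        have h := hterm c a hca.symm
        rw [hxc] at h
        have := hEnn a c
        rw [hEsym c a]
        linarith
      have hEda : E d a = 0 := by
        have h := hterm d a hda.symm
        rw [hxd] at h
        have := hEnn a d
        rw [hEsym d a]
        linarith
      have hdecompa : ⟪α - β, γ a⟫ = E a a + E b a + E c a + E d a := by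
        rw [hsg a]
        exact fin4_sum_eq (fun t => E t a) habi hca.symm hda.symm hcb.symm hdb.symm hcd
      have hEba : m ≤ E a b := by
        rw [hdecompa, hEca, hEda, hEaam] at hxa
        rw [hEsym a b]
        linarith
      have hablt : E a b < m := by
        have hw : 0 < ⟪γ a - γ b, γ a - γ b⟫ := inner_self_pos' (sub_ne_zero.mpr huv)
        rw [real_inner_sub_sub_self] at hw
        have e1 : (⟪γ a, γ a⟫ : ℝ) = E a a := by simp only [hE]
        have e2 : (⟪γ b, γ b⟫ : ℝ) = E b b := by simp only [hE]
        have e3 : (⟪γ a, γ b⟫ : ℝ) = E a b := by simp only [hE]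
        rw [e1, e2, e3, hEaam, hEbbm] at hw
        linarith
      linarith
    -- now the four possible length configurations
    obtain ⟨z1, hz1⟩ := D.crystallographic α hα (-β) hδ
    obtain ⟨z2, hz2⟩ := D.crystallographic (-β) hδ α hα
    have e1 := RootSystemData.cpair_mul α (-β) (ne_of_gt (D.inner_self_pos hδ))
    have e2 := RootSystemData.cpair_mul (-β) α (ne_of_gt (D.inner_self_pos hα))
    rw [hz1] at e1
    rw [hz2, real_inner_comm α (-β)] at e2
    have hple := D.cpair_prod_le_two hG2 hα hδ hδne1 hδne2
    have hpnn := RootSystemData.cpair_prod_nonneg α (-β)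
    rw [hz1, hz2] at hple hpnn
    have hple' : z1 * z2 ≤ 2 := by exact_mod_cast hple
    have hpnn' : (0:ℤ) ≤ z1 * z2 := by exact_mod_cast hpnn
    rcases hdich α hα with hnα | hnα <;> rcases hdich (-β) hδ with hnδ | hnδ
    · -- both short : impossible by the lower bound
      rw [hnδ] at e1
      rw [hnα] at e2
      have hz12 : z1 = z2 := by
        have : (z1 : ℝ) * m = (z2 : ℝ) * m := by linarith
        exact_mod_cast mul_right_cancel₀ (ne_of_gt hm) this
      have hz1le : z1 ≤ 1 := by nlinarith [hple', hz12]
      have : (z1 : ℝ) ≤ 1 := by exact_mod_cast hz1le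
      rw [hSS', hnα, hnδ] at hlow
      nlinarith
    · -- α short, -β long : mixed
      rw [hnδ] at e1
      rw [hnα] at e2
      have hz21 : z2 = 2 * z1 := by
        have : (z2 : ℝ) * m = (2 * z1 : ℝ) * m := by push_cast; linarith
        exact_mod_cast mul_right_cancel₀ (ne_of_gt hm) this
      have hz1ge : 1 ≤ z1 := by
        rw [hSS', hnα, hnδ] at hlow
        have h3 : (1 : ℝ) * m ≤ (z1 : ℝ) * m := by nlinarith
        have : (1 : ℝ) ≤ (z1 : ℝ) := by nlinarith
        exact_mod_cast this
      have hz1eq : z1 = 1 := by nlinarith [hple', hz21, hz1ge]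
      have hA0 : ⟪α, -β⟫ = m := by
        rw [hz1eq] at e1
        push_cast at e1
        linarith
      exact ML α (-β) hα hδ hnα hnδ hA0 hSd
    · -- α long, -β short : mixed
      rw [hnδ] at e1
      rw [hnα] at e2
      have hz12 : z1 = 2 * z2 := by
        have : (z1 : ℝ) * m = (2 * z2 : ℝ) * m := by push_cast; linarith
        exact_mod_cast mul_right_cancel₀ (ne_of_gt hm) this
      have hz2ge : 1 ≤ z2 := by
        rw [hSS', hnα, hnδ] at hlow
        have : (1 : ℝ) ≤ (z2 : ℝ) := by nlinarith
        exact_mod_cast this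
      have hz2eq : z2 = 1 := by nlinarith [hple', hz12, hz2ge]
      have hA0 : ⟪-β, α⟫ = m := by
        rw [hz2eq] at e2
        push_cast at e2
        rw [real_inner_comm α (-β)]
        linarith
      exact ML (-β) α hδ hα hnδ hnα hA0 (by rw [hSd, add_comm])
    · -- both long
      rw [hnδ] at e1
      rw [hnα] at e2
      have hz12 : z1 = z2 := by
        have : (z1 : ℝ) * (2 * m) = (z2 : ℝ) * (2 * m) := by linarith
        exact_mod_cast mul_right_cancel₀ (by positivity) this
      have hz1ge : 1 ≤ z1 := by
        rw [hSS', hnα, hnδ] at hlow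
        have h3 : (0 : ℝ) < (z1 : ℝ) := by nlinarith
        have : (0 : ℤ) < z1 := by exact_mod_cast h3
        omega
      have hz1eq : z1 = 1 := by nlinarith [hple', hz12, hz1ge]
      have hA0 : ⟪α, -β⟫ = m := by
        rw [hz1eq] at e1
        push_cast at e1
        linarith
      exact LL hnα hnδ hA0
end
end
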